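/- arXiv:1511.03117 — 2 statements merged into one kernel-verified Lean document; each statement's English description precedes it below -/
import Mathlib

section
/- Let Π = {z ∈ ℂ : Im z > 0} be the upper half-plane and 𝔻 the unit disc. For every z ∈ Π ∩ 𝔻, 0 ≤ κ_{Π∩𝔻}(z) − 1/(2 Im z) ≤ |z|/(1 − |z|²), where κ_{Π∩𝔻} is the Kobayashi metric of Π ∩ 𝔻 (and 1/(2 Im z) is the Kobayashi metric of Π at z). -/
noncomputable section

/-- The Kobayashi metric of a planar domain `D` (at vector `1`):
`κ_D(z) = inf {|α| : ∃ φ ∈ O(𝔻, D), φ 0 = z, α • φ'(0) = 1}`. -/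
def kobMetric (D : Set ℂ) (z : ℂ) : ℝ :=
  sInf {r : ℝ | ∃ α : ℂ, r = ‖α‖ ∧ ∃ φ : ℂ → ℂ,
    DifferentiableOn ℂ φ (Metric.ball 0 1) ∧ Set.MapsTo φ (Metric.ball 0 1) D ∧
    φ 0 = z ∧ α * deriv φ 0 = 1}

/-- The Carathéodory metric of a planar domain `D` (at vector `1`):
`γ_D(z) = sup {|ψ'(z)| : ψ ∈ O(D, 𝔻), ψ z = 0}`. -/
def caraMetric (D : Set ℂ) (z : ℂ) : ℝ :=
  sSup {r : ℝ | ∃ ψ : ℂ → ℂ, DifferentiableOn ℂ ψ D ∧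
    Set.MapsTo ψ D (Metric.ball 0 1) ∧ ψ z = 0 ∧ r = ‖deriv ψ z‖}

/-- The Bergman kernel of `D` on the diagonal. -/
def bergmanKernel (D : Set ℂ) (z : ℂ) : ℝ :=
  sSup {r : ℝ | ∃ f : ℂ → ℂ, DifferentiableOn ℂ f D ∧
    (∫⁻ w in D, (‖f w‖₊ : ENNReal) ^ 2) ≤ 1 ∧ r = ‖f z‖ ^ 2}

/-- `M_D(z) = sup {|f'(z)| : f ∈ L²_h(D), ‖f‖ ≤ 1, f z = 0}`. -/
def bergmanM (D : Set ℂ) (z : ℂ) : ℝ :=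
  sSup {r : ℝ | ∃ f : ℂ → ℂ, DifferentiableOn ℂ f D ∧
    (∫⁻ w in D, (‖f w‖₊ : ENNReal) ^ 2) ≤ 1 ∧ f z = 0 ∧ r = ‖deriv f z‖}

/-- The Bergman metric `β_D = M_D / √K_D`. -/
def bergmanMetric (D : Set ℂ) (z : ℂ) : ℝ := bergmanM D z / Real.sqrt (bergmanKernel D z)

/-- A set `E ⊆ ℂ` is polar iff it has zero logarithmic capacity, i.e. every nonzero finite
measure compactly supported in `E` has infinite logarithmic energy
`∫∫ log(1/|z-w|) dμ dμ = +∞` (equivalently, `log dist` is not `μ ⊗ μ`-integrable). -/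
def IsPolar (E : Set ℂ) : Prop :=
  ∀ μ : MeasureTheory.Measure ℂ, MeasureTheory.IsFiniteMeasure μ → μ ≠ 0 →
    (∃ K : Set ℂ, IsCompact K ∧ K ⊆ E ∧ μ Kᶜ = 0) →
    ¬ MeasureTheory.Integrable (fun p : ℂ × ℂ => Real.log (dist p.1 p.2)) (μ.prod μ)

/-- Signed curvature of a plane curve `γ` at parameter `t`:
`Im(conj γ'(t) * γ''(t)) / |γ'(t)|³`. -/
def signedCurv (γ : ℝ → ℂ) (t : ℝ) : ℝ :=
  ((starRingEnd ℂ) (deriv γ t) * deriv (deriv γ) t).im / ‖deriv γ t‖ ^ 3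

/-- Inverse hyperbolic tangent. -/
def artanh (x : ℝ) : ℝ := Real.log ((1 + x) / (1 - x)) / 2

/-- The Carathéodory distance:
`c_D(z,w) = sup {artanh |ψ w| : ψ ∈ O(D, 𝔻), ψ z = 0}`. -/
def caraDist (D : Set ℂ) (z w : ℂ) : ℝ :=
  sSup {r : ℝ | ∃ ψ : ℂ → ℂ, DifferentiableOn ℂ ψ D ∧ Set.MapsTo ψ D (Metric.ball 0 1) ∧
    ψ z = 0 ∧ r = artanh (‖ψ w‖)}

/-- The Lempert function:
`l_D(z,w) = inf {artanh |α| : ∃ φ ∈ O(𝔻, D), φ 0 = z, φ α = w}`. -/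
def lempertFun (D : Set ℂ) (z w : ℂ) : ℝ :=
  sInf {r : ℝ | ∃ α : ℂ, ‖α‖ < 1 ∧ r = artanh (‖α‖) ∧
    ∃ φ : ℂ → ℂ, DifferentiableOn ℂ φ (Metric.ball 0 1) ∧ Set.MapsTo φ (Metric.ball 0 1) D ∧
    φ 0 = z ∧ φ α = w}

/-- The Kobayashi distance: the largest pseudodistance on `D` not exceeding
the Lempert function. -/
def kobDist (D : Set ℂ) (z w : ℂ) : ℝ :=
  sSup {r : ℝ | ∃ p : ℂ → ℂ → ℝ, (∀ x ∈ D, p x x = 0) ∧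
    (∀ x ∈ D, ∀ y ∈ D, 0 ≤ p x y) ∧ (∀ x ∈ D, ∀ y ∈ D, p x y = p y x) ∧
    (∀ x ∈ D, ∀ y ∈ D, ∀ u ∈ D, p x u ≤ p x y + p y u) ∧
    (∀ x ∈ D, ∀ y ∈ D, p x y ≤ lempertFun D x y) ∧ r = p z w}

/-- The Bergman distance: the integrated form of the Bergman metric. -/
def bergmanDist (D : Set ℂ) (z w : ℂ) : ℝ :=
  sInf {r : ℝ | ∃ γ : ℝ → ℂ, ContDiff ℝ 1 γ ∧ (∀ t ∈ Set.Icc (0:ℝ) 1, γ t ∈ D) ∧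
    γ 0 = z ∧ γ 1 = w ∧
    r = ∫ t in (0:ℝ)..1, bergmanMetric D (γ t) * ‖deriv γ t‖}

/-- `s_D(z,w) = arsinh (|z-w| / (2 √(d_D(z) d_D(w))))`. -/
def sFun (D : Set ℂ) (z w : ℂ) : ℝ :=
  Real.arsinh (‖z - w‖ /
    (2 * Real.sqrt (Metric.infDist z (frontier D) * Metric.infDist w (frontier D))))

/-- `a` is a `C¹`-smooth boundary point of `D`: near `a` the boundary `∂D` is the image of a
`C¹` curve with nonvanishing derivative. -/
def IsC1BoundaryPoint (D : Set ℂ) (a : ℂ) : Prop :=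
  a ∈ frontier D ∧ ∃ (U : Set ℂ) (γ : ℝ → ℂ), IsOpen U ∧ a ∈ U ∧
    ContDiff ℝ 1 γ ∧ (∀ t, deriv γ t ≠ 0) ∧ Set.InjOn γ (Set.Icc 0 1) ∧
    frontier D ∩ U = γ '' Set.Ioo 0 1

/-- `a` is a `C^{1,ε}`-smooth boundary point of `D`: near `a` the boundary `∂D` is the image of
a `C¹` curve with nonvanishing, `ε`-Hölder continuous derivative. -/
def IsC1epsBoundaryPoint (ε : ℝ) (D : Set ℂ) (a : ℂ) : Prop :=
  a ∈ frontier D ∧ ∃ (U : Set ℂ) (γ : ℝ → ℂ), IsOpen U ∧ a ∈ U ∧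
    ContDiff ℝ 1 γ ∧ (∀ t, deriv γ t ≠ 0) ∧ Set.InjOn γ (Set.Icc 0 1) ∧
    frontier D ∩ U = γ '' Set.Ioo 0 1 ∧
    ∃ C : NNReal, HolderOnWith C ε.toNNReal (deriv γ) (Set.Icc 0 1)

/-- `a` is a Dini-smooth boundary point of `D`: near `a` the boundary `∂D` is the image of a
`C¹` curve with nonvanishing derivative admitting a modulus of continuity `ω` with
`∫₀¹ ω(t)/t dt < ∞`. -/
def IsDiniBoundaryPoint (D : Set ℂ) (a : ℂ) : Prop :=
  a ∈ frontier D ∧ ∃ (U : Set ℂ) (γ : ℝ → ℂ), IsOpen U ∧ a ∈ U ∧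
    ContDiff ℝ 1 γ ∧ (∀ t, deriv γ t ≠ 0) ∧ Set.InjOn γ (Set.Icc 0 1) ∧
    frontier D ∩ U = γ '' Set.Ioo 0 1 ∧
    ∃ ω : ℝ → ℝ, (∀ t, 0 ≤ ω t) ∧
      (∀ s ∈ Set.Icc (0:ℝ) 1, ∀ t ∈ Set.Icc (0:ℝ) 1,
        ‖deriv γ s - deriv γ t‖ ≤ ω |s - t|) ∧
      MeasureTheory.IntegrableOn (fun t => ω t / t) (Set.Ioc (0:ℝ) 1)

/-! The lower bound is the Schwarz lemma moved to the upper half-plane `Π` by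
`w ↦ (w - z) / (w - conj z)`: a holomorphic disc `φ` in `Π ∩ 𝔻 ⊆ Π` with `φ 0 = z` has
`|φ'(0)| ≤ 2 Im z`.

For the upper bound, `F w = ((1 + w) / (1 - w))²` maps `Π ∩ 𝔻` biholomorphically onto `Π`, with
inverse `G v = (√v - 1) / (√v + 1)`. Composing `G` with a Möbius disc of `Π` centred at `F z` gives
`κ(z) ≤ |F'(z)| / (2 Im F(z)) = |1 - z²| / (2 Im z (1 - |z|²))`, and
`|1 - z²| ≤ 1 - |z|² + 2 |z| Im z`. -/

open Complex ComplexConjugate Metric Set Filter Topology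

theorem kobMetric_le {D : Set ℂ} {z α : ℂ} {φ : ℂ → ℂ} (hφ : DifferentiableOn ℂ φ (ball 0 1))
    (hmaps : MapsTo φ (ball 0 1) D) (h0 : φ 0 = z) (hα : α * deriv φ 0 = 1) :
    kobMetric D z ≤ ‖α‖ :=
  csInf_le ⟨0, by rintro r ⟨β, rfl, -⟩; exact norm_nonneg β⟩ ⟨α, rfl, φ, hφ, hmaps, h0, hα⟩

theorem le_kobMetric {D : Set ℂ} {z : ℂ} {c : ℝ} (hD : IsOpen D) (hz : z ∈ D)
    (h : ∀ (φ : ℂ → ℂ) (α : ℂ), DifferentiableOn ℂ φ (ball 0 1) → MapsTo φ (ball 0 1) D →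
      φ 0 = z → α * deriv φ 0 = 1 → c ≤ ‖α‖) :
    c ≤ kobMetric D z := by
  obtain ⟨ρ, hρ, hball⟩ := Metric.isOpen_iff.1 hD z hz
  have hρ' : (ρ : ℂ) ≠ 0 := by exact_mod_cast hρ.ne'
  refine le_csInf ⟨_, (ρ : ℂ)⁻¹, rfl, fun w => z + ρ * w, by fun_prop, ?_, by simp, ?_⟩ ?_
  · intro w hw
    apply hball
    rw [mem_ball_zero_iff] at hw
    rw [mem_ball, dist_eq_norm, add_sub_cancel_left, norm_mul, norm_real, Real.norm_of_nonneg hρ.le]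
    exact mul_lt_of_lt_one_right hρ hw
  · simp [hρ']
  · rintro r ⟨α, rfl, φ, hφ, hmaps, h0, hα⟩
    exact h φ α hφ hmaps h0 hα

theorem norm_sub_lt_norm_sub_conj {u v : ℂ} (hu : 0 < u.im) (hv : 0 < v.im) :
    ‖u - v‖ < ‖u - conj v‖ := by
  rw [← pow_lt_pow_iff_left₀ (norm_nonneg _) (norm_nonneg _) two_ne_zero,
    Complex.sq_norm, Complex.sq_norm, normSq_apply, normSq_apply]
  simp only [sub_re, sub_im, conj_re, conj_im, sub_neg_eq_add, add_lt_add_iff_left]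
  nlinarith

theorem norm_sub_conj (z : ℂ) : ‖z - conj z‖ = 2 * |z.im| := by
  rw [sub_conj, norm_mul, norm_I, mul_one, norm_real, Real.norm_eq_abs, abs_mul, abs_two]

theorem norm_deriv_le_two_im {φ : ℂ → ℂ} (hφ : DifferentiableOn ℂ φ (ball 0 1))
    (hmaps : MapsTo φ (ball 0 1) {w | 0 < w.im}) : ‖deriv φ 0‖ ≤ 2 * (φ 0).im := by
  set z := φ 0
  have h0 : (0 : ℂ) ∈ ball 0 1 := mem_ball_self one_pos
  have hz : 0 < z.im := hmaps h0
  have hne : ∀ w ∈ ball (0 : ℂ) 1, φ w - conj z ≠ 0 := fun w hw h => by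
    have him := congrArg im h
    have hw' : 0 < (φ w).im := hmaps hw
    simp only [sub_im, conj_im, sub_neg_eq_add, zero_im] at him
    linarith
  set g := fun w => (φ w - z) / (φ w - conj z)
  have hg : DifferentiableOn ℂ g (ball 0 1) := (hφ.sub_const z).div (hφ.sub_const _) hne
  have hgmaps : MapsTo g (ball 0 1) (closedBall (g 0) 1) := by
    intro w hw
    rw [mem_closedBall, dist_eq_norm]
    simp only [g, z, sub_self, zero_div, sub_zero, norm_div]
    exact div_le_one_of_le₀ (norm_sub_lt_norm_sub_conj (hmaps hw) hz).le (norm_nonneg _)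
  have hφ0 : HasDerivAt φ (deriv φ 0) 0 :=
    (hφ.differentiableAt (isOpen_ball.mem_nhds h0)).hasDerivAt
  have hzz : z - conj z ≠ 0 := hne 0 h0
  have hderiv : deriv g 0 = deriv φ 0 / (z - conj z) := by
    have hg0 : HasDerivAt g _ 0 := (hφ0.sub_const z).div (hφ0.sub_const _) hzz
    rw [hg0.deriv, show φ 0 = z from rfl, sub_self, zero_mul, sub_zero, sq, ← div_div,
      mul_div_cancel_right₀ _ hzz]
  have hschwarz := norm_deriv_le_div_of_mapsTo_ball hg hgmaps one_pos
  rwa [hderiv, norm_div, norm_sub_conj, abs_of_pos hz, div_one,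
    div_le_one (by positivity)] at hschwarz

theorem one_div_two_im_le_kobMetric {D : Set ℂ} {z : ℂ} (hD : IsOpen D)
    (hDsub : D ⊆ {w | 0 < w.im}) (hz : z ∈ D) : 1 / (2 * z.im) ≤ kobMetric D z := by
  refine le_kobMetric hD hz fun φ α hφ hmaps h0 hα => ?_
  have hderiv := norm_deriv_le_two_im hφ (hmaps.mono_right hDsub)
  have hz' : 0 < z.im := hDsub hz
  rw [h0] at hderiv
  rw [div_le_iff₀ (by positivity)]
  calc 1 = ‖α‖ * ‖deriv φ 0‖ := by rw [← norm_mul, hα, norm_one]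
    _ ≤ ‖α‖ * (2 * z.im) := by gcongr

def cayley (w : ℂ) : ℂ := (1 + w) / (1 - w)

def cayleyInv (u : ℂ) : ℂ := (u - 1) / (u + 1)

theorem cayley_re (w : ℂ) : (cayley w).re = (1 - ‖w‖ ^ 2) / ‖1 - w‖ ^ 2 := by
  simp only [cayley, div_re, Complex.sq_norm, normSq_apply]
  simp only [add_re, one_re, sub_re, sub_im, one_im, zero_sub, mul_neg, neg_mul, neg_neg, add_im,
    zero_add]
  ring

theorem cayley_im (w : ℂ) : (cayley w).im = 2 * w.im / ‖1 - w‖ ^ 2 := by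
  simp only [cayley, div_im, Complex.sq_norm, normSq_apply]
  simp only [add_im, one_im, zero_add, sub_re, one_re, sub_im, zero_sub, mul_neg, neg_mul, neg_neg,
    add_re]
  ring

theorem cayley_re_pos {w : ℂ} (hw : ‖w‖ < 1) : 0 < (cayley w).re := by
  have hw1 : 1 - w ≠ 0 := fun h => by simp [← eq_of_sub_eq_zero h] at hw
  rw [cayley_re]
  exact div_pos (by nlinarith [norm_nonneg w]) (by positivity)

theorem cayley_im_pos {w : ℂ} (hw : ‖w‖ < 1) (him : 0 < w.im) : 0 < (cayley w).im := by
  have hw1 : 1 - w ≠ 0 := fun h => by simp [← eq_of_sub_eq_zero h] at hw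
  rw [cayley_im]
  positivity

theorem hasDerivAt_cayley {w : ℂ} (hw : w ≠ 1) : HasDerivAt cayley (2 / (1 - w) ^ 2) w := by
  have h := ((hasDerivAt_id' w).const_add 1).div ((hasDerivAt_id' w).const_sub 1)
    (sub_ne_zero.2 hw.symm)
  rwa [show 1 * (1 - w) - (1 + w) * -1 = (2 : ℂ) by ring] at h

theorem cayleyInv_cayley {w : ℂ} (hw : w ≠ 1) : cayleyInv (cayley w) = w := by
  have : (1 : ℂ) - w ≠ 0 := sub_ne_zero.2 hw.symm
  simp only [cayleyInv, cayley]
  field_simp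
  ring

theorem cayleyInv_mem_halfDisc {u : ℂ} (hre : 0 < u.re) (him : 0 < u.im) :
    cayleyInv u ∈ {w : ℂ | 0 < w.im} ∩ ball 0 1 := by
  have hN : 0 < normSq (u + 1) := by
    rw [normSq_apply]; simp only [add_re, one_re, add_im, one_im, add_zero]; nlinarith
  constructor
  · simp only [mem_ofPred_eq, cayleyInv, div_im]
    simp only [sub_im, one_im, sub_zero, add_re, one_re, sub_re, add_im, add_zero, sub_pos]
    exact div_lt_div_of_pos_right (by nlinarith) hN
  · rw [mem_ball_zero_iff, cayleyInv, norm_div, div_lt_one (by simpa using hN),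
      ← pow_lt_pow_iff_left₀ (norm_nonneg _) (norm_nonneg _) two_ne_zero,
      Complex.sq_norm, Complex.sq_norm, normSq_apply, normSq_apply]
    simp only [sub_re, one_re, sub_im, one_im, sub_zero, add_re, add_im, add_zero,
      add_lt_add_iff_right]
    nlinarith

theorem cpow_inv_two_re_pos {v : ℂ} (hv : 0 < v.im) : 0 < (v ^ (2⁻¹ : ℂ)).re := by
  rw [cpow_inv_two_re]
  apply Real.sqrt_pos.2
  have := abs_re_lt_norm.2 hv.ne'
  have := neg_abs_le v.re
  linarith

theorem cpow_inv_two_im_pos {v : ℂ} (hv : 0 < v.im) : 0 < (v ^ (2⁻¹ : ℂ)).im := by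
  rw [cpow_inv_two_im_eq_sqrt hv.le]
  apply Real.sqrt_pos.2
  have := abs_re_lt_norm.2 hv.ne'
  have := le_abs_self v.re
  linarith

theorem differentiableOn_cayleyInv_sqrt :
    DifferentiableOn ℂ (fun v => cayleyInv (v ^ (2⁻¹ : ℂ))) {v | 0 < v.im} := fun v hv => by
  have hsqrt : DifferentiableAt ℂ (fun v : ℂ => v ^ (2⁻¹ : ℂ)) v :=
    differentiableAt_id.cpow_const (mem_slitPlane_iff.2 (Or.inr (ne_of_gt hv)))
  have hne : v ^ (2⁻¹ : ℂ) + 1 ≠ 0 := fun h => by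
    have := congrArg re h
    simp only [add_re, one_re, zero_re] at this
    linarith [cpow_inv_two_re_pos hv]
  exact ((hsqrt.sub_const 1).div (hsqrt.add_const 1) hne).differentiableWithinAt

theorem mapsTo_cayleyInv_sqrt :
    MapsTo (fun v => cayleyInv (v ^ (2⁻¹ : ℂ))) {v | 0 < v.im} ({w | 0 < w.im} ∩ ball 0 1) :=
  fun _ hv => cayleyInv_mem_halfDisc (cpow_inv_two_re_pos hv) (cpow_inv_two_im_pos hv)

theorem cayleyInv_sqrt_cayley_sq {w : ℂ} (hw : ‖w‖ < 1) :
    cayleyInv ((cayley w ^ 2) ^ (2⁻¹ : ℂ)) = w := by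
  rw [sq_cpow_two_inv (cayley_re_pos hw), cayleyInv_cayley]
  rintro rfl
  simp at hw

theorem kobMetric_le_of_leftInverse_upperHalfPlane {D : Set ℂ} {G F : ℂ → ℂ} {z F' : ℂ}
    (hG : DifferentiableOn ℂ G {v | 0 < v.im}) (hGD : MapsTo G {v | 0 < v.im} D)
    (hF : HasDerivAt F F' z) (hFz : 0 < (F z).im) (hGF : ∀ᶠ w in 𝓝 z, G (F w) = w) :
    kobMetric D z ≤ ‖F'‖ / (2 * (F z).im) := by
  set v := F z
  have hGv : HasDerivAt G (deriv G v) v :=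
    (hG.differentiableAt ((isOpen_lt continuous_const continuous_im).mem_nhds hFz)).hasDerivAt
  have hGF' : deriv G v * F' = 1 :=
    (hGv.comp z hF).unique ((hasDerivAt_id z).congr_of_eventuallyEq hGF)
  set ψ : ℂ → ℂ := fun w => v.re + v.im * I * cayley w
  have hψ0 : ψ 0 = v := by simp [ψ, cayley, re_add_im]
  have hψ : ∀ w ∈ ball (0 : ℂ) 1, HasDerivAt ψ (v.im * I * (2 / (1 - w) ^ 2)) w := fun w hw =>
    ((hasDerivAt_cayley (ne_of_mem_of_not_mem hw (by simp))).const_mul _).const_add _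
  have hψmaps : MapsTo ψ (ball 0 1) {v | 0 < v.im} := fun w hw => by
    have := cayley_re_pos (mem_ball_zero_iff.1 hw)
    have hψw : (ψ w).im = v.im * (cayley w).re := by simp [ψ]
    rw [mem_ofPred_eq, hψw]
    positivity
  have hφ : DifferentiableOn ℂ (G ∘ ψ) (ball 0 1) :=
    hG.comp (fun w hw => (hψ w hw).differentiableAt.differentiableWithinAt) hψmaps
  have hderiv : deriv (G ∘ ψ) 0 = deriv G v * (v.im * I * 2) := by
    simpa using (hGv.comp_of_eq 0 (hψ 0 (mem_ball_self one_pos)) hψ0.symm).deriv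
  calc kobMetric D z ≤ ‖F' / (2 * v.im * I)‖ := by
        refine kobMetric_le hφ (hGD.comp hψmaps) (by simp [hψ0, v, hGF.self_of_nhds]) ?_
        have : (v.im : ℂ) ≠ 0 := ofReal_ne_zero.2 hFz.ne'
        rw [hderiv, ← hGF']
        field_simp
    _ = ‖F'‖ / (2 * v.im) := by
        rw [norm_div, norm_mul, norm_I, mul_one, norm_mul, Complex.norm_two, norm_real,
          Real.norm_of_nonneg hFz.le]

theorem kobMetric_halfDisc_le {z : ℂ} (hz : z ∈ {w : ℂ | 0 < w.im} ∩ ball 0 1) :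
    kobMetric ({w : ℂ | 0 < w.im} ∩ ball 0 1) z ≤ ‖1 - z ^ 2‖ / (2 * z.im * (1 - ‖z‖ ^ 2)) := by
  obtain ⟨hy : 0 < z.im, hr⟩ := hz
  rw [mem_ball_zero_iff] at hr
  have hz1 : 1 - z ≠ 0 := fun h => by simp [← eq_of_sub_eq_zero h] at hr
  have hF := (hasDerivAt_cayley (sub_ne_zero.1 hz1).symm).fun_pow 2
  have hFz : 0 < (cayley z ^ 2).im := by
    have := cayley_re_pos hr
    have := cayley_im_pos hr hy
    rw [sq, mul_im]
    positivity
  refine (kobMetric_le_of_leftInverse_upperHalfPlane differentiableOn_cayleyInv_sqrt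
    mapsTo_cayleyInv_sqrt hF hFz ?_).trans_eq ?_
  · filter_upwards [isOpen_ball.mem_nhds (mem_ball_zero_iff.2 hr)] with w hw
    exact cayleyInv_sqrt_cayley_sq (mem_ball_zero_iff.1 hw)
  · have hn : ‖1 - z‖ ≠ 0 := norm_ne_zero_iff.2 hz1
    have hr2 : 1 - ‖z‖ ^ 2 ≠ 0 := by nlinarith [norm_nonneg z]
    rw [sq (cayley z), mul_im, cayley_re, cayley_im, show 1 - z ^ 2 = (1 + z) * (1 - z) by ring]
    norm_num [cayley, norm_mul, norm_div, norm_pow]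
    field_simp
    ring

theorem norm_one_sub_sq_le {z : ℂ} (hz : ‖z‖ ≤ 1) (hy : 0 ≤ z.im) :
    ‖1 - z ^ 2‖ ≤ 1 - ‖z‖ ^ 2 + 2 * z.im * ‖z‖ := by
  have hyr : z.im ≤ ‖z‖ := im_le_norm z
  have hsq : ‖1 - z ^ 2‖ ^ 2 = (1 - ‖z‖ ^ 2) ^ 2 + 4 * z.im ^ 2 := by
    rw [Complex.sq_norm, Complex.sq_norm, normSq_apply, normSq_apply]
    simp only [sq, sub_re, one_re, mul_re, sub_im, one_im, mul_im, zero_sub, neg_add_rev]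
    ring
  have hr2 : 0 ≤ 1 - ‖z‖ ^ 2 := by nlinarith [norm_nonneg z]
  rw [← pow_le_pow_iff_left₀ (norm_nonneg _) (by positivity) two_ne_zero, hsq]
  nlinarith [mul_nonneg (mul_nonneg hy (sub_nonneg.2 hyr)) hr2]

/-- Localization lemma: if `Π` is the upper half-plane and `𝔻` the unit disc, then for
`z ∈ Π ∩ 𝔻` one has `0 ≤ κ_{Π ∩ 𝔻}(z) - 1/(2 Im z) ≤ |z|/(1 - |z|²)`
(here `1/(2 Im z)` is the Kobayashi metric of `Π` at `z`). -/
theorem kobayashi_metric_halfdisc_localization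
    (z : ℂ) (hz : z ∈ {w : ℂ | 0 < w.im} ∩ Metric.ball 0 1) :
    0 ≤ kobMetric ({w : ℂ | 0 < w.im} ∩ Metric.ball 0 1) z - 1 / (2 * z.im) ∧
    kobMetric ({w : ℂ | 0 < w.im} ∩ Metric.ball 0 1) z - 1 / (2 * z.im) ≤
      ‖z‖ / (1 - ‖z‖ ^ 2) := by
  obtain ⟨hy : 0 < z.im, hr⟩ := id hz
  rw [mem_ball_zero_iff] at hr
  have hlower := one_div_two_im_le_kobMetric
    ((isOpen_lt continuous_const continuous_im).inter isOpen_ball) inter_subset_left hz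
  have hupper := kobMetric_halfDisc_le hz
  have hr2 : 0 < 1 - ‖z‖ ^ 2 := by nlinarith [norm_nonneg z]
  refine ⟨sub_nonneg.2 hlower, ?_⟩
  calc _ ≤ ‖1 - z ^ 2‖ / (2 * z.im * (1 - ‖z‖ ^ 2)) - 1 / (2 * z.im) := by gcongr
    _ ≤ (1 - ‖z‖ ^ 2 + 2 * z.im * ‖z‖) / (2 * z.im * (1 - ‖z‖ ^ 2)) - 1 / (2 * z.im) := by
        gcongr
        exact norm_one_sub_sq_le hr.le hy.le
    _ = ‖z‖ / (1 - ‖z‖ ^ 2) := by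
        field_simp
        ring

end
end

section
/- Let ε ∈ (0,1) and define f(z) = z − z^{1+ε}/4 on 𝔻₁ = {z ∈ ℂ : |z−1| < 1}, using the principal branch of z^{1+ε}. Then Re f'(z) > 0 for all z ∈ 𝔻₁ and f is injective on 𝔻₁. -/
noncomputable section

/-!
On `𝔻₁` the principal branch satisfies `|z ^ ε| = |z| ^ ε < 2`, so `(1 + ε) z ^ ε / 4` has norm
less than `1` and `Re f' = Re (1 - (1 + ε) z ^ ε / 4) > 0`. Injectivity is the
Noshiro–Warschawski theorem: if `f z = f w` with `z ≠ w`, then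
`t ↦ Re (conj (w - z) * f (z + t (w - z)))` has derivative `|w - z|² Re f' > 0` on `[0, 1]`,
yet takes the same value at both ends.
-/

open Complex Metric Set ComplexConjugate

theorem Convex.injOn_of_re_deriv_pos {s : Set ℂ} {f : ℂ → ℂ} (hs : Convex ℝ s)
    (hf : ∀ z ∈ s, DifferentiableAt ℂ f z) (hre : ∀ z ∈ s, 0 < (deriv f z).re) :
    InjOn f s := by
  intro z hz w hw hfzw
  by_contra hne
  set u := w - z
  have hu : u ≠ 0 := sub_ne_zero.2 (Ne.symm hne)
  have hseg : ∀ t ∈ Icc (0 : ℝ) 1, z + t * u ∈ s := fun t ht => by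
    simpa [real_smul] using hs.add_smul_sub_mem hz hw ht
  set g : ℝ → ℝ := fun t => (conj u * f (z + t * u)).re
  have hg : ∀ t ∈ Icc (0 : ℝ) 1, HasDerivAt g (normSq u * (deriv f (z + t * u)).re) t := by
    intro t ht
    have hline : HasDerivAt (fun s : ℂ => z + s * u) u t := by
      simpa using ((hasDerivAt_id (t : ℂ)).mul_const u).const_add z
    have := reCLM.hasFDerivAt.comp_hasDerivAt t
      ((((hf _ (hseg t ht)).hasDerivAt.comp (t : ℂ) hline).comp_ofReal).const_mul (conj u))
    refine this.congr_deriv ?_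
    rw [reCLM_apply, mul_left_comm, ← normSq_eq_conj_mul_self, re_mul_ofReal, mul_comm]
  have hmono : StrictMonoOn g (Icc 0 1) := by
    refine strictMonoOn_of_deriv_pos (convex_Icc 0 1)
      (fun t ht => (hg t ht).continuousAt.continuousWithinAt) fun t ht => ?_
    rw [interior_Icc] at ht
    rw [(hg t (Ioo_subset_Icc_self ht)).deriv]
    exact mul_pos (normSq_pos.2 hu) (hre _ (hseg t (Ioo_subset_Icc_self ht)))
  have := hmono (left_mem_Icc.2 zero_le_one) (right_mem_Icc.2 zero_le_one) zero_lt_one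
  simp [g, u, hfzw] at this

theorem norm_lt_two_of_mem_ball_one {z : ℂ} (hz : z ∈ ball (1 : ℂ) 1) : ‖z‖ < 2 := by
  simpa using ball_subset_ball' (by norm_num : (1 : ℝ) + dist (1 : ℂ) 0 ≤ 2) hz

theorem re_one_sub_mul_cpow_div_four_pos {ε : ℝ} (hε : 0 < ε) (hε1 : ε ≤ 1) {z : ℂ}
    (hz : z ∈ ball (1 : ℂ) 1) : 0 < (1 - ((1 + ε : ℝ) : ℂ) * z ^ (ε : ℂ) / 4).re := by
  have hpow : ‖z‖ ^ ε < 2 :=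
    calc ‖z‖ ^ ε < 2 ^ ε := Real.rpow_lt_rpow (norm_nonneg z) (norm_lt_two_of_mem_ball_one hz) hε
      _ ≤ 2 ^ (1 : ℝ) := Real.rpow_le_rpow_of_exponent_le one_le_two hε1
      _ = 2 := Real.rpow_one 2
  have hnorm : ‖((1 + ε : ℝ) : ℂ) * z ^ (ε : ℂ) / 4‖ < 1 := by
    rw [norm_div, norm_mul, norm_cpow_real, norm_real, Real.norm_of_nonneg (by linarith),
      RCLike.norm_ofNat, div_lt_one four_pos]
    nlinarith [Real.rpow_nonneg (norm_nonneg z) ε]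
  rw [sub_re, one_re, sub_pos]
  exact (re_le_norm _).trans_lt hnorm

/-- For `ε ∈ (0,1)`, the function `f(z) = z - z^{1+ε}/4` (principal branch) has
`Re f' > 0` on `𝔻₁ = {|z-1| < 1}` and is injective there. -/
theorem univalent_on_disc (ε : ℝ) (hε : 0 < ε) (hε1 : ε < 1) :
    (∀ z ∈ Metric.ball (1:ℂ) 1,
      0 < (deriv (fun w : ℂ => w - w ^ ((1 + ε : ℝ) : ℂ) / 4) z).re) ∧
    Set.InjOn (fun w : ℂ => w - w ^ ((1 + ε : ℝ) : ℂ) / 4) (Metric.ball (1:ℂ) 1) := by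
  have hderiv : ∀ z ∈ ball (1 : ℂ) 1, HasDerivAt (fun w : ℂ => w - w ^ ((1 + ε : ℝ) : ℂ) / 4)
      (1 - ((1 + ε : ℝ) : ℂ) * z ^ (ε : ℂ) / 4) z := by
    intro z hz
    have hpow := (hasStrictDerivAt_cpow_const (c := ((1 + ε : ℝ) : ℂ))
      (ball_one_subset_slitPlane hz)).hasDerivAt
    rw [show ((1 + ε : ℝ) : ℂ) - 1 = ε by push_cast; ring] at hpow
    exact (hasDerivAt_id z).sub (hpow.div_const 4)
  have hre : ∀ z ∈ ball (1 : ℂ) 1,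
      0 < (deriv (fun w : ℂ => w - w ^ ((1 + ε : ℝ) : ℂ) / 4) z).re := fun z hz => by
    rw [(hderiv z hz).deriv]
    exact re_one_sub_mul_cpow_div_four_pos hε hε1.le hz
  exact ⟨hre, (convex_ball 1 1).injOn_of_re_deriv_pos
    (fun z hz => (hderiv z hz).differentiableAt) hre⟩
end
end
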